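/- arXiv:2505.13865 — 2 statements merged into one kernel-verified Lean document; each statement's English description precedes it below -/
import Mathlib

section
/- The composition of two admissible UPO-graphs is an admissible UPO-graph: if (G₁,σ₁,≺₁) and (G₂,σ₂,≺₂) are admissible UPO-graphs with the number of output edges of G₁ equal to the number of input edges of G₂, then (G₂∘G₁, σ₂△σ₁, ≺₂∘≺₁) is an admissible UPO-graph. -/
/-- A progressive graph: a directed (multi)graph with sources `s`, targets `t`, and
a distinguished boundary set `σ` of vertices. -/
structure PGraph where
  V : Type
  E : Type
  s : E → V
  t : E → V
  σ : Set V

namespace PGraph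

variable (G : PGraph)

/-- One edge can be followed by another. -/
def step (e f : G.E) : Prop := G.t e = G.s f

/-- The reachable order: a directed path starts with `e₁` and ends with `e₂`. -/
def reach : G.E → G.E → Prop := Relation.ReflTransGen G.step

/-- No directed cycles. -/
def Acyclic : Prop := ∀ e, ¬ Relation.TransGen G.step e e

/-- Incoming edges of a vertex. -/
def I (v : G.V) : Set G.E := {e | G.t e = v}

/-- Outgoing edges of a vertex. -/
def O (v : G.V) : Set G.E := {e | G.s e = v}

/-- An input edge: it starts at a boundary vertex. -/
def InputEdge (e : G.E) : Prop := G.s e ∈ G.σ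

/-- An output edge: it ends at a boundary vertex. -/
def OutputEdge (e : G.E) : Prop := G.t e ∈ G.σ

/-- An inner vertex. -/
def Inner (v : G.V) : Prop := v ∉ G.σ

/-- An input vertex: a boundary vertex which is a source. -/
def InputVertex (v : G.V) : Prop := v ∈ G.σ ∧ ∃ e, G.s e = v

/-- An output vertex: a boundary vertex which is a sink. -/
def OutputVertex (v : G.V) : Prop := v ∈ G.σ ∧ ∃ e, G.t e = v

/-- The boundary consists of leaves: every boundary vertex has exactly one
incident edge-end. -/
def Progressive : Prop := ∀ v ∈ G.σ, ∃! e : G.E, G.s e = v ∨ G.t e = v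

/-- The reflexive closure of a strict order on edges. -/
def le (lt : G.E → G.E → Prop) (a b : G.E) : Prop := lt a b ∨ a = b

/-- The convex hull of a set of edges with respect to a linear order `lt`. -/
def conv (lt : G.E → G.E → Prop) (X : Set G.E) : Set G.E :=
  {y | ∃ a ∈ X, ∃ b ∈ X, G.le lt a y ∧ G.le lt y b}

/-- (Q₁): the reachable order implies the linear order. -/
def Q1 (lt : G.E → G.E → Prop) : Prop :=
  ∀ e₁ e₂, G.reach e₁ e₂ → G.le lt e₁ e₂

/-- (Q₂), the nesting condition. -/
def Q2 (lt : G.E → G.E → Prop) : Prop :=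
  ∀ e₁ e e₂ : G.E, lt e₁ e → lt e e₂ →
    (G.t e₁ = G.t e₂ → G.I (G.t e) ⊆ G.conv lt (G.I (G.t e₁))) ∧
    (G.s e₁ = G.s e₂ → G.O (G.s e) ⊆ G.conv lt (G.O (G.s e₁))) ∧
    (G.t e₁ = G.s e₂ →
      G.I (G.t e) ⊆ G.conv lt (G.I (G.t e₁)) ∨ G.O (G.s e) ⊆ G.conv lt (G.O (G.s e₂)))

/-- An upward planar order: a linear (strict total) order on edges satisfying
(Q₁) and the nesting condition (Q₂). -/
def UPO (lt : G.E → G.E → Prop) : Prop :=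
  IsStrictTotalOrder G.E lt ∧ G.Q1 lt ∧ G.Q2 lt

/-- Admissibility: for every inner vertex `v`, input edges avoid `conv (O v)` and
output edges avoid `conv (I v)`. -/
def Admissible (lt : G.E → G.E → Prop) : Prop :=
  ∀ v : G.V, G.Inner v →
    (∀ e, G.InputEdge e → e ∉ G.conv lt (G.O v)) ∧
    (∀ e, G.OutputEdge e → e ∉ G.conv lt (G.I v))

end PGraph

/-- Data exhibiting `G` as the composite `G₂ ∘ G₁` of two progressive graphs:
the edges of `G₁` and `G₂` embed into those of `G` via `j₁`, `j₂`, overlapping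
exactly on the output edges of `G₁`, identified with the input edges of `G₂`;
the removed boundary vertices are the output vertices of `G₁` and the input
vertices of `G₂`, and the boundary of `G` is the union of the input vertices of
`G₁` and the output vertices of `G₂`. -/
structure CompData (G₁ G₂ G : PGraph) where
  j₁ : G₁.E → G.E
  j₂ : G₂.E → G.E
  k₁ : G₁.V → G.V
  k₂ : G₂.V → G.V
  inj₁ : Function.Injective j₁
  inj₂ : Function.Injective j₂
  coverE : ∀ e : G.E, (∃ a, j₁ a = e) ∨ (∃ b, j₂ b = e)
  glue : ∀ a b, j₁ a = j₂ b → G₁.OutputEdge a ∧ G₂.InputEdge b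
  glueOut : ∀ a, G₁.OutputEdge a → ∃ b, G₂.InputEdge b ∧ j₁ a = j₂ b
  glueIn : ∀ b, G₂.InputEdge b → ∃ a, G₁.OutputEdge a ∧ j₁ a = j₂ b
  src₁ : ∀ a, G.s (j₁ a) = k₁ (G₁.s a)
  tgt₁ : ∀ a, ¬ G₁.OutputEdge a → G.t (j₁ a) = k₁ (G₁.t a)
  tgt₂ : ∀ b, G.t (j₂ b) = k₂ (G₂.t b)
  src₂ : ∀ b, ¬ G₂.InputEdge b → G.s (j₂ b) = k₂ (G₂.s b)
  injV₁ : ∀ v w, ¬ G₁.OutputVertex v → ¬ G₁.OutputVertex w → k₁ v = k₁ w → v = w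
  injV₂ : ∀ v w, ¬ G₂.InputVertex v → ¬ G₂.InputVertex w → k₂ v = k₂ w → v = w
  disjV : ∀ v w, ¬ G₁.OutputVertex v → ¬ G₂.InputVertex w → k₁ v ≠ k₂ w
  coverV : ∀ u : G.V,
    (∃ v, ¬ G₁.OutputVertex v ∧ k₁ v = u) ∨ (∃ w, ¬ G₂.InputVertex w ∧ k₂ w = u)
  bdry : ∀ u : G.V,
    u ∈ G.σ ↔ (∃ v, G₁.InputVertex v ∧ k₁ v = u) ∨ (∃ w, G₂.OutputVertex w ∧ k₂ w = u)

/-- `lt` is the shuffle-style composed linear order `lt₂ ∘ lt₁` on the edges of the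
composite: it restricts to `lt₁` on `E(G₁)` and to `lt₂` on `E(G₂)`, and an
unidentified edge of `G₁` precedes an unidentified edge of `G₂` iff some identified
edge `ē = j₁ o = j₂ i` lies weakly between them. -/
def IsCompOrder {G₁ G₂ G : PGraph} (C : CompData G₁ G₂ G)
    (lt₁ : G₁.E → G₁.E → Prop) (lt₂ : G₂.E → G₂.E → Prop)
    (lt : G.E → G.E → Prop) : Prop :=
  (∀ a a', lt₁ a a' ↔ lt (C.j₁ a) (C.j₁ a')) ∧
  (∀ b b', lt₂ b b' ↔ lt (C.j₂ b) (C.j₂ b')) ∧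
  (∀ a b, (∀ b', C.j₁ a ≠ C.j₂ b') → (∀ a', C.j₂ b ≠ C.j₁ a') →
    (lt (C.j₁ a) (C.j₂ b) ↔
      ∃ o i, C.j₁ o = C.j₂ i ∧ G₁.le lt₁ a o ∧ G₂.le lt₂ i b))

section Helpers

namespace PGraph

theorem end_unique {G : PGraph} (hP : G.Progressive) {v : G.V} (hv : v ∈ G.σ)
    {a b : G.E} (ha : G.s a = v ∨ G.t a = v) (hb : G.s b = v ∨ G.t b = v) : a = b := by
  obtain ⟨e, -, he⟩ := hP v hv
  rw [he a ha, he b hb]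

theorem src_not_out {G : PGraph} (hP : G.Progressive) (hA : G.Acyclic) (a : G.E) :
    ¬ G.OutputVertex (G.s a) := by
  rintro ⟨hσ, e, he⟩
  have h : e = a := end_unique hP hσ (Or.inr he) (Or.inl rfl)
  exact hA a (Relation.TransGen.single (show G.t a = G.s a by rw [h] at he; exact he))

theorem tgt_not_in {G : PGraph} (hP : G.Progressive) (hA : G.Acyclic) (a : G.E) :
    ¬ G.InputVertex (G.t a) := by
  rintro ⟨hσ, e, he⟩
  have h : e = a := end_unique hP hσ (Or.inl he) (Or.inr rfl)
  exact hA a (Relation.TransGen.single (show G.t a = G.s a by rw [h] at he; exact he.symm))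

end PGraph

section CompProof

variable {G₁ G₂ G : PGraph} (C : CompData G₁ G₂ G)
variable {lt₁ : G₁.E → G₁.E → Prop} {lt₂ : G₂.E → G₂.E → Prop} {lt : G.E → G.E → Prop}

theorem not_glued₁ {a : G₁.E} (ha : ¬ G₁.OutputEdge a) : ∀ b, C.j₁ a ≠ C.j₂ b :=
  fun b h => ha (C.glue a b h).1

theorem not_glued₂ {b : G₂.E} (hb : ¬ G₂.InputEdge b) : ∀ a, C.j₂ b ≠ C.j₁ a :=
  fun a h => hb (C.glue a b h.symm).2

theorem le₁_iff (hC : IsCompOrder C lt₁ lt₂ lt) (a a' : G₁.E) :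
    G₁.le lt₁ a a' ↔ G.le lt (C.j₁ a) (C.j₁ a') := by
  constructor
  · rintro (h | rfl)
    · exact Or.inl ((hC.1 a a').mp h)
    · exact Or.inr rfl
  · rintro (h | h)
    · exact Or.inl ((hC.1 a a').mpr h)
    · exact Or.inr (C.inj₁ h)

theorem le₂_iff (hC : IsCompOrder C lt₁ lt₂ lt) (b b' : G₂.E) :
    G₂.le lt₂ b b' ↔ G.le lt (C.j₂ b) (C.j₂ b') := by
  constructor
  · rintro (h | rfl)
    · exact Or.inl ((hC.2.1 b b').mp h)
    · exact Or.inr rfl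
  · rintro (h | h)
    · exact Or.inl ((hC.2.1 b b').mpr h)
    · exact Or.inr (C.inj₂ h)

theorem mixed_iff (hC : IsCompOrder C lt₁ lt₂ lt) {a : G₁.E} {b : G₂.E}
    (ha : ¬ G₁.OutputEdge a) (hb : ¬ G₂.InputEdge b) :
    lt (C.j₁ a) (C.j₂ b) ↔
      ∃ o i, C.j₁ o = C.j₂ i ∧ G₁.le lt₁ a o ∧ G₂.le lt₂ i b :=
  hC.2.2 a b (not_glued₁ C ha) (not_glued₂ C hb)

theorem conv_mono₁ (hC : IsCompOrder C lt₁ lt₂ lt) {X : Set G₁.E} {y : G₁.E}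
    (hy : y ∈ G₁.conv lt₁ X) : C.j₁ y ∈ G.conv lt (C.j₁ '' X) := by
  obtain ⟨a, haX, b, hbX, h1, h2⟩ := hy
  exact ⟨C.j₁ a, ⟨a, haX, rfl⟩, C.j₁ b, ⟨b, hbX, rfl⟩,
    (le₁_iff C hC a y).mp h1, (le₁_iff C hC y b).mp h2⟩

theorem conv_mono₂ (hC : IsCompOrder C lt₁ lt₂ lt) {X : Set G₂.E} {y : G₂.E}
    (hy : y ∈ G₂.conv lt₂ X) : C.j₂ y ∈ G.conv lt (C.j₂ '' X) := by
  obtain ⟨a, haX, b, hbX, h1, h2⟩ := hy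
  exact ⟨C.j₂ a, ⟨a, haX, rfl⟩, C.j₂ b, ⟨b, hbX, rfl⟩,
    (le₂_iff C hC a y).mp h1, (le₂_iff C hC y b).mp h2⟩

theorem conv_refl₁ (hC : IsCompOrder C lt₁ lt₂ lt) {X : Set G₁.E} {y : G₁.E}
    (hy : C.j₁ y ∈ G.conv lt (C.j₁ '' X)) : y ∈ G₁.conv lt₁ X := by
  obtain ⟨a, ⟨a₀, ha₀, rfl⟩, b, ⟨b₀, hb₀, rfl⟩, h1, h2⟩ := hy
  exact ⟨a₀, ha₀, b₀, hb₀, (le₁_iff C hC a₀ y).mpr h1, (le₁_iff C hC y b₀).mpr h2⟩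

theorem conv_refl₂ (hC : IsCompOrder C lt₁ lt₂ lt) {X : Set G₂.E} {y : G₂.E}
    (hy : C.j₂ y ∈ G.conv lt (C.j₂ '' X)) : y ∈ G₂.conv lt₂ X := by
  obtain ⟨a, ⟨a₀, ha₀, rfl⟩, b, ⟨b₀, hb₀, rfl⟩, h1, h2⟩ := hy
  exact ⟨a₀, ha₀, b₀, hb₀, (le₂_iff C hC a₀ y).mpr h1, (le₂_iff C hC y b₀).mpr h2⟩

theorem I_comp₁ (hP₂ : G₂.Progressive) (hA₂ : G₂.Acyclic) {v : G₁.V} (hv : ¬ G₁.OutputVertex v) :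
    G.I (C.k₁ v) = C.j₁ '' G₁.I v := by
  ext e
  constructor
  · intro he'
    have he : G.t e = C.k₁ v := he'
    by_cases h : ∃ a, C.j₁ a = e
    · obtain ⟨a, rfl⟩ := h
      by_cases ho : G₁.OutputEdge a
      · obtain ⟨b, -, heq⟩ := C.glueOut a ho
        rw [heq, C.tgt₂ b] at he
        exact absurd he.symm (C.disjV v (G₂.t b) hv (PGraph.tgt_not_in hP₂ hA₂ b))
      · rw [C.tgt₁ a ho] at he
        exact ⟨a, C.injV₁ _ _ (fun hx => ho hx.1) hv he, rfl⟩
    · rcases C.coverE e with h' | ⟨b, rfl⟩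
      · exact absurd h' h
      · by_cases hb : G₂.InputEdge b
        · obtain ⟨a, -, heq⟩ := C.glueIn b hb
          exact absurd ⟨a, heq⟩ h
        · rw [C.tgt₂ b] at he
          exact absurd he.symm (C.disjV v (G₂.t b) hv (PGraph.tgt_not_in hP₂ hA₂ b))
  · rintro ⟨a, ha', rfl⟩
    have ha : G₁.t a = v := ha'
    have ho : ¬ G₁.OutputEdge a := fun h => hv ⟨ha ▸ h, a, ha⟩
    show G.t (C.j₁ a) = C.k₁ v
    rw [C.tgt₁ a ho, ha]

theorem O_comp₁ (hP₁ : G₁.Progressive) (hA₁ : G₁.Acyclic) {v : G₁.V} (hv : ¬ G₁.OutputVertex v) :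
    G.O (C.k₁ v) = C.j₁ '' G₁.O v := by
  ext e
  constructor
  · intro he'
    have he : G.s e = C.k₁ v := he'
    by_cases h : ∃ a, C.j₁ a = e
    · obtain ⟨a, rfl⟩ := h
      rw [C.src₁ a] at he
      exact ⟨a, C.injV₁ _ _ (PGraph.src_not_out hP₁ hA₁ a) hv he, rfl⟩
    · rcases C.coverE e with h' | ⟨b, rfl⟩
      · exact absurd h' h
      · by_cases hb : G₂.InputEdge b
        · obtain ⟨a, -, heq⟩ := C.glueIn b hb
          exact absurd ⟨a, heq⟩ h
        · rw [C.src₂ b hb] at he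
          exact absurd he.symm (C.disjV v (G₂.s b) hv (fun hx => hb hx.1))
  · rintro ⟨a, ha', rfl⟩
    have ha : G₁.s a = v := ha'
    show G.s (C.j₁ a) = C.k₁ v
    rw [C.src₁ a, ha]

theorem I_comp₂ (hP₂ : G₂.Progressive) (hA₂ : G₂.Acyclic) {w : G₂.V} (hw : ¬ G₂.InputVertex w) :
    G.I (C.k₂ w) = C.j₂ '' G₂.I w := by
  ext e
  constructor
  · intro he'
    have he : G.t e = C.k₂ w := he'
    by_cases h : ∃ b, C.j₂ b = e
    · obtain ⟨b, rfl⟩ := h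
      rw [C.tgt₂ b] at he
      exact ⟨b, C.injV₂ _ _ (PGraph.tgt_not_in hP₂ hA₂ b) hw he, rfl⟩
    · rcases C.coverE e with ⟨a, rfl⟩ | h'
      · have ho : ¬ G₁.OutputEdge a := by
          intro ho
          obtain ⟨b, -, heq⟩ := C.glueOut a ho
          exact h ⟨b, heq.symm⟩
        rw [C.tgt₁ a ho] at he
        exact absurd he (C.disjV (G₁.t a) w (fun hx => ho hx.1) hw)
      · exact absurd h' h
  · rintro ⟨b, hb', rfl⟩
    have hb : G₂.t b = w := hb'
    show G.t (C.j₂ b) = C.k₂ w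
    rw [C.tgt₂ b, hb]

theorem O_comp₂ (hP₁ : G₁.Progressive) (hA₁ : G₁.Acyclic) {w : G₂.V} (hw : ¬ G₂.InputVertex w) :
    G.O (C.k₂ w) = C.j₂ '' G₂.O w := by
  ext e
  constructor
  · intro he'
    have he : G.s e = C.k₂ w := he'
    by_cases h : ∃ b, C.j₂ b = e
    · obtain ⟨b, rfl⟩ := h
      by_cases hb : G₂.InputEdge b
      · obtain ⟨a, -, heq⟩ := C.glueIn b hb
        rw [← heq, C.src₁ a] at he
        exact absurd he (C.disjV (G₁.s a) w (PGraph.src_not_out hP₁ hA₁ a) hw)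
      · rw [C.src₂ b hb] at he
        exact ⟨b, C.injV₂ _ _ (fun hx => hb hx.1) hw he, rfl⟩
    · rcases C.coverE e with ⟨a, rfl⟩ | h'
      · rw [C.src₁ a] at he
        exact absurd he (C.disjV (G₁.s a) w (PGraph.src_not_out hP₁ hA₁ a) hw)
      · exact absurd h' h
  · rintro ⟨b, hb', rfl⟩
    have hb : G₂.s b = w := hb'
    have hbi : ¬ G₂.InputEdge b := fun h => hw ⟨hb ▸ h, b, hb⟩
    show G.s (C.j₂ b) = C.k₂ w
    rw [C.src₂ b hbi, hb]

theorem sto_asymm {E : Type} {r : E → E → Prop} (h : IsStrictTotalOrder E r) {a b : E}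
    (h1 : r a b) (h2 : r b a) : False := h.irrefl a (h.trans _ _ _ h1 h2)

theorem sto_lt_of_not_le {E : Type} {r : E → E → Prop} (h : IsStrictTotalOrder E r) {a b : E}
    (hn : ¬ (r a b ∨ a = b)) : r b a := by
  rcases (haveI := h; trichotomous_of r a b) with h1 | h1 | h1
  · exact absurd (Or.inl h1) hn
  · exact absurd (Or.inr h1) hn
  · exact h1

theorem sto_lt_of_le_ne {E : Type} {r : E → E → Prop} {a b : E}
    (hle : r a b ∨ a = b) (hne : a ≠ b) : r a b := hle.resolve_right hne

theorem S1L (hC : IsCompOrder C lt₁ lt₂ lt) (hst : IsStrictTotalOrder G.E lt)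
    (hst₁ : IsStrictTotalOrder G₁.E lt₁) (hAd₁ : G₁.Admissible lt₁)
    {v' : G₁.V} (hv' : v' ∉ G₁.σ) {x aₘ : G₁.E} (hx : G₁.t x = v') (haₘ : G₁.t aₘ = v')
    {b : G₂.E} (hlt : lt (C.j₂ b) (C.j₁ aₘ)) : lt (C.j₂ b) (C.j₁ x) := by
  have hxo : ¬ G₁.OutputEdge x := fun h => hv' (hx ▸ h)
  have hao : ¬ G₁.OutputEdge aₘ := fun h => hv' (haₘ ▸ h)
  rcases eq_or_ne x aₘ with rfl | hne
  · exact hlt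
  refine sto_lt_of_not_le hst (fun hxb => ?_)
  rcases hxb with hxb | hxb
  swap
  · exact not_glued₁ C hxo b hxb
  by_cases hb : G₂.InputEdge b
  · obtain ⟨o_b, hob, heq⟩ := C.glueIn b hb
    rw [← heq] at hxb hlt
    exact (hAd₁ v' hv').2 o_b hob
      ⟨x, hx, aₘ, haₘ, Or.inl ((hC.1 _ _).mpr hxb), Or.inl ((hC.1 _ _).mpr hlt)⟩
  · rw [mixed_iff C hC hxo hb] at hxb
    obtain ⟨o, i, hglue, hxo', hib⟩ := hxb
    have hoo : G₁.OutputEdge o := (C.glue _ _ hglue).1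
    have h1 : lt₁ x o := sto_lt_of_le_ne hxo' (fun h => hxo (h ▸ hoo))
    have hnot : ¬ lt (C.j₁ aₘ) (C.j₂ b) := fun h => sto_asymm hst h hlt
    rw [mixed_iff C hC hao hb] at hnot
    have h2 : lt₁ o aₘ := sto_lt_of_not_le hst₁
      (fun hle => hnot ⟨o, i, hglue, hle, hib⟩)
    exact (hAd₁ v' hv').2 o hoo ⟨x, hx, aₘ, haₘ, Or.inl h1, Or.inl h2⟩

theorem S1R (hC : IsCompOrder C lt₁ lt₂ lt) (hst : IsStrictTotalOrder G.E lt)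
    (hst₁ : IsStrictTotalOrder G₁.E lt₁) (hAd₁ : G₁.Admissible lt₁)
    {v' : G₁.V} (hv' : v' ∉ G₁.σ) {x aₘ : G₁.E} (hx : G₁.t x = v') (haₘ : G₁.t aₘ = v')
    {b : G₂.E} (hlt : lt (C.j₁ aₘ) (C.j₂ b)) : lt (C.j₁ x) (C.j₂ b) := by
  have hxo : ¬ G₁.OutputEdge x := fun h => hv' (hx ▸ h)
  have hao : ¬ G₁.OutputEdge aₘ := fun h => hv' (haₘ ▸ h)
  rcases eq_or_ne x aₘ with rfl | hne
  · exact hlt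
  by_cases hb : G₂.InputEdge b
  · obtain ⟨o_b, hob, heq⟩ := C.glueIn b hb
    rw [← heq] at hlt ⊢
    have h2 : lt₁ aₘ o_b := (hC.1 _ _).mpr hlt
    have h1 : lt₁ x o_b := by
      refine sto_lt_of_not_le hst₁ (fun hle => ?_)
      rcases hle with hle | hle
      · exact (hAd₁ v' hv').2 o_b hob ⟨aₘ, haₘ, x, hx, Or.inl h2, Or.inl hle⟩
      · exact hxo (hle ▸ hob)
    exact (hC.1 _ _).mp h1
  · refine sto_lt_of_not_le hst (fun hxb => ?_)
    rcases hxb with hxb | hxb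
    swap
    · exact not_glued₁ C hxo b hxb.symm
    rw [mixed_iff C hC hao hb] at hlt
    obtain ⟨o, i, hglue, hao', hib⟩ := hlt
    have hoo : G₁.OutputEdge o := (C.glue _ _ hglue).1
    have h1 : lt₁ aₘ o := sto_lt_of_le_ne hao' (fun h => hao (h ▸ hoo))
    have hnot : ¬ lt (C.j₁ x) (C.j₂ b) := fun h => sto_asymm hst h hxb
    rw [mixed_iff C hC hxo hb] at hnot
    have h2 : lt₁ o x := sto_lt_of_not_le hst₁
      (fun hle => hnot ⟨o, i, hglue, hle, hib⟩)
    exact (hAd₁ v' hv').2 o hoo ⟨aₘ, haₘ, x, hx, Or.inl h1, Or.inl h2⟩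

theorem S2L (hC : IsCompOrder C lt₁ lt₂ lt) (hst : IsStrictTotalOrder G.E lt)
    (hst₂ : IsStrictTotalOrder G₂.E lt₂) (hAd₂ : G₂.Admissible lt₂)
    {w' : G₂.V} (hw' : w' ∉ G₂.σ) {x bₘ : G₂.E} (hx : G₂.s x = w') (hbₘ : G₂.s bₘ = w')
    {a : G₁.E} (hlt : lt (C.j₁ a) (C.j₂ bₘ)) : lt (C.j₁ a) (C.j₂ x) := by
  have hxi : ¬ G₂.InputEdge x := fun h => hw' (hx ▸ h)
  have hbi : ¬ G₂.InputEdge bₘ := fun h => hw' (hbₘ ▸ h)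
  rcases eq_or_ne x bₘ with rfl | hne
  · exact hlt
  by_cases ha : G₁.OutputEdge a
  · obtain ⟨i_a, hia, heq⟩ := C.glueOut a ha
    rw [heq] at hlt ⊢
    have h2 : lt₂ i_a bₘ := (hC.2.1 _ _).mpr hlt
    have h1 : lt₂ i_a x := by
      refine sto_lt_of_not_le hst₂ (fun hle => ?_)
      rcases hle with hle | hle
      · exact (hAd₂ w' hw').1 i_a hia ⟨x, hx, bₘ, hbₘ, Or.inl hle, Or.inl h2⟩
      · exact hxi (hle ▸ hia)
    exact (hC.2.1 _ _).mp h1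
  · refine sto_lt_of_not_le hst (fun hxa => ?_)
    rcases hxa with hxa | hxa
    swap
    · exact not_glued₂ C hxi a hxa
    rw [mixed_iff C hC ha hbi] at hlt
    obtain ⟨o, i, hglue, hao', hib⟩ := hlt
    have hii : G₂.InputEdge i := (C.glue _ _ hglue).2
    have h1 : lt₂ i bₘ := sto_lt_of_le_ne hib (fun h => hbi (h ▸ hii))
    have hnot : ¬ lt (C.j₁ a) (C.j₂ x) := fun h => sto_asymm hst h hxa
    rw [mixed_iff C hC ha hxi] at hnot
    have h2 : lt₂ x i := sto_lt_of_not_le hst₂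
      (fun hle => hnot ⟨o, i, hglue, hao', hle⟩)
    exact (hAd₂ w' hw').1 i hii ⟨x, hx, bₘ, hbₘ, Or.inl h2, Or.inl h1⟩

theorem S2R (hC : IsCompOrder C lt₁ lt₂ lt) (hst : IsStrictTotalOrder G.E lt)
    (hst₂ : IsStrictTotalOrder G₂.E lt₂) (hAd₂ : G₂.Admissible lt₂)
    {w' : G₂.V} (hw' : w' ∉ G₂.σ) {x bₘ : G₂.E} (hx : G₂.s x = w') (hbₘ : G₂.s bₘ = w')
    {a : G₁.E} (hlt : lt (C.j₂ bₘ) (C.j₁ a)) : lt (C.j₂ x) (C.j₁ a) := by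
  have hxi : ¬ G₂.InputEdge x := fun h => hw' (hx ▸ h)
  have hbi : ¬ G₂.InputEdge bₘ := fun h => hw' (hbₘ ▸ h)
  rcases eq_or_ne x bₘ with rfl | hne
  · exact hlt
  by_cases ha : G₁.OutputEdge a
  · obtain ⟨i_a, hia, heq⟩ := C.glueOut a ha
    rw [heq] at hlt ⊢
    have h2 : lt₂ bₘ i_a := (hC.2.1 _ _).mpr hlt
    have h1 : lt₂ x i_a := by
      refine sto_lt_of_not_le hst₂ (fun hle => ?_)
      rcases hle with hle | hle
      · exact (hAd₂ w' hw').1 i_a hia ⟨bₘ, hbₘ, x, hx, Or.inl h2, Or.inl hle⟩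
      · exact hxi (hle ▸ hia)
    exact (hC.2.1 _ _).mp h1
  · refine sto_lt_of_not_le hst (fun hax => ?_)
    rcases hax with hax | hax
    swap
    · exact not_glued₂ C hxi a hax.symm
    rw [mixed_iff C hC ha hxi] at hax
    obtain ⟨o, i, hglue, hao', hix⟩ := hax
    have hii : G₂.InputEdge i := (C.glue _ _ hglue).2
    have h1 : lt₂ i x := sto_lt_of_le_ne hix (fun h => hxi (h ▸ hii))
    have hnot : ¬ lt (C.j₁ a) (C.j₂ bₘ) := fun h => sto_asymm hst h hlt
    rw [mixed_iff C hC ha hbi] at hnot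
    have h2 : lt₂ bₘ i := sto_lt_of_not_le hst₂
      (fun hle => hnot ⟨o, i, hglue, hao', hle⟩)
    exact (hAd₂ w' hw').1 i hii ⟨bₘ, hbₘ, x, hx, Or.inl h2, Or.inl h1⟩

theorem V2 (hC : IsCompOrder C lt₁ lt₂ lt) (hst : IsStrictTotalOrder G.E lt)
    (hst₁ : IsStrictTotalOrder G₁.E lt₁) (hAd₁ : G₁.Admissible lt₁)
    {v : G₁.V} (hv : v ∉ G₁.σ) {a₁ a₂ : G₁.E} (h₁ : G₁.t a₁ = v) (h₂ : G₁.t a₂ = v)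
    {b : G₂.E} (hlt₁ : lt (C.j₁ a₁) (C.j₂ b)) (hlt₂ : lt (C.j₂ b) (C.j₁ a₂)) : False := by
  have ho₁ : ¬ G₁.OutputEdge a₁ := fun h => hv (h₁ ▸ h)
  have ho₂ : ¬ G₁.OutputEdge a₂ := fun h => hv (h₂ ▸ h)
  by_cases hb : G₂.InputEdge b
  · obtain ⟨o_b, hob, heq⟩ := C.glueIn b hb
    rw [← heq] at hlt₁ hlt₂
    exact (hAd₁ v hv).2 o_b hob
      ⟨a₁, h₁, a₂, h₂, Or.inl ((hC.1 _ _).mpr hlt₁), Or.inl ((hC.1 _ _).mpr hlt₂)⟩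
  · rw [mixed_iff C hC ho₁ hb] at hlt₁
    obtain ⟨o, i, hglue, h1, hib⟩ := hlt₁
    have hoo : G₁.OutputEdge o := (C.glue _ _ hglue).1
    have hnot : ¬ lt (C.j₁ a₂) (C.j₂ b) := fun h => sto_asymm hst h hlt₂
    rw [mixed_iff C hC ho₂ hb] at hnot
    have h2 : lt₁ o a₂ := sto_lt_of_not_le hst₁
      (fun hle => hnot ⟨o, i, hglue, hle, hib⟩)
    exact (hAd₁ v hv).2 o hoo ⟨a₁, h₁, a₂, h₂, h1, Or.inl h2⟩

theorem V3 (hC : IsCompOrder C lt₁ lt₂ lt) (hst : IsStrictTotalOrder G.E lt)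
    (hst₂ : IsStrictTotalOrder G₂.E lt₂) (hAd₂ : G₂.Admissible lt₂)
    {w : G₂.V} (hw : w ∉ G₂.σ) {b₁ b₂ : G₂.E} (h₁ : G₂.s b₁ = w) (h₂ : G₂.s b₂ = w)
    {a : G₁.E} (hlt₁ : lt (C.j₂ b₁) (C.j₁ a)) (hlt₂ : lt (C.j₁ a) (C.j₂ b₂)) : False := by
  have hi₁ : ¬ G₂.InputEdge b₁ := fun h => hw (h₁ ▸ h)
  have hi₂ : ¬ G₂.InputEdge b₂ := fun h => hw (h₂ ▸ h)
  by_cases ha : G₁.OutputEdge a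
  · obtain ⟨i_a, hia, heq⟩ := C.glueOut a ha
    rw [heq] at hlt₁ hlt₂
    exact (hAd₂ w hw).1 i_a hia
      ⟨b₁, h₁, b₂, h₂, Or.inl ((hC.2.1 _ _).mpr hlt₁), Or.inl ((hC.2.1 _ _).mpr hlt₂)⟩
  · rw [mixed_iff C hC ha hi₂] at hlt₂
    obtain ⟨o, i, hglue, hao, hib⟩ := hlt₂
    have hii : G₂.InputEdge i := (C.glue _ _ hglue).2
    have hnot : ¬ lt (C.j₁ a) (C.j₂ b₁) := fun h => sto_asymm hst h hlt₁
    rw [mixed_iff C hC ha hi₁] at hnot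
    have h1 : lt₂ b₁ i := sto_lt_of_not_le hst₂
      (fun hle => hnot ⟨o, i, hglue, hao, hle⟩)
    exact (hAd₂ w hw).1 i hii ⟨b₁, h₁, b₂, h₂, Or.inl h1, hib⟩

theorem compQ2_tt
    (hP₁ : G₁.Progressive) (hA₁ : G₁.Acyclic) (hU₁ : G₁.UPO lt₁) (hAd₁ : G₁.Admissible lt₁)
    (hP₂ : G₂.Progressive) (hA₂ : G₂.Acyclic) (hU₂ : G₂.UPO lt₂) (hAd₂ : G₂.Admissible lt₂)
    (hst : IsStrictTotalOrder G.E lt) (hC : IsCompOrder C lt₁ lt₂ lt)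
    {e₁ e e₂ : G.E} (h1 : lt e₁ e) (h2 : lt e e₂) (h : G.t e₁ = G.t e₂) :
    G.I (G.t e) ⊆ G.conv lt (G.I (G.t e₁)) := by
  rcases C.coverV (G.t e₁) with ⟨v, hv, hkv⟩ | ⟨w, hw, hkw⟩
  · -- shared target vertex comes from G₁
    have hI : G.I (G.t e₁) = C.j₁ '' G₁.I v := by
      rw [← hkv]; exact I_comp₁ C hP₂ hA₂ hv
    have hm₁ : e₁ ∈ G.I (G.t e₁) := rfl
    have hm₂ : e₂ ∈ G.I (G.t e₁) := h.symm
    rw [hI] at hm₁ hm₂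
    obtain ⟨a₁, ha₁, he₁⟩ := hm₁
    obtain ⟨a₂, ha₂, he₂⟩ := hm₂
    have ha₁' : G₁.t a₁ = v := ha₁
    have ha₂' : G₁.t a₂ = v := ha₂
    have hvσ : v ∉ G₁.σ := fun hσ => hv ⟨hσ, a₁, ha₁'⟩
    by_cases hje : ∃ bₘ, C.j₂ bₘ = e
    · obtain ⟨bₘ, rfl⟩ := hje
      rw [← he₁] at h1; rw [← he₂] at h2
      exact absurd (V2 C hC hst hU₁.1 hAd₁ hvσ ha₁' ha₂' h1 h2) not_false
    · rcases C.coverE e with ⟨aₘ, rfl⟩ | hje'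
      swap
      · exact absurd hje' hje
      have hao : ¬ G₁.OutputEdge aₘ := by
        intro ho
        obtain ⟨bₘ, -, heq⟩ := C.glueOut aₘ ho
        exact hje ⟨bₘ, heq.symm⟩
      rw [← he₁] at h1; rw [← he₂] at h2
      have hlt1 : lt₁ a₁ aₘ := (hC.1 _ _).mpr h1
      have hlt2 : lt₁ aₘ a₂ := (hC.1 _ _).mpr h2
      have hQ := (hU₁.2.2 a₁ aₘ a₂ hlt1 hlt2).1 (ha₁'.trans ha₂'.symm)
      rw [ha₁'] at hQ
      rw [hI, C.tgt₁ aₘ hao, I_comp₁ C hP₂ hA₂ (fun hx => hao hx.1)]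
      rintro _ ⟨x, hx, rfl⟩
      exact conv_mono₁ C hC (hQ hx)
  · -- shared target vertex comes from G₂
    have hI : G.I (G.t e₁) = C.j₂ '' G₂.I w := by
      rw [← hkw]; exact I_comp₂ C hP₂ hA₂ hw
    have hm₁ : e₁ ∈ G.I (G.t e₁) := rfl
    have hm₂ : e₂ ∈ G.I (G.t e₁) := h.symm
    rw [hI] at hm₁ hm₂
    obtain ⟨b₁, hb₁, he₁⟩ := hm₁
    obtain ⟨b₂, hb₂, he₂⟩ := hm₂
    have hb₁' : G₂.t b₁ = w := hb₁
    have hb₂' : G₂.t b₂ = w := hb₂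
    rw [← he₁] at h1; rw [← he₂] at h2
    by_cases hje : ∃ bₘ, C.j₂ bₘ = e
    · obtain ⟨bₘ, rfl⟩ := hje
      have hlt1 : lt₂ b₁ bₘ := (hC.2.1 _ _).mpr h1
      have hlt2 : lt₂ bₘ b₂ := (hC.2.1 _ _).mpr h2
      have hQ := (hU₂.2.2 b₁ bₘ b₂ hlt1 hlt2).1 (hb₁'.trans hb₂'.symm)
      rw [hb₁'] at hQ
      rw [hI, C.tgt₂ bₘ, I_comp₂ C hP₂ hA₂ (PGraph.tgt_not_in hP₂ hA₂ bₘ)]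
      rintro _ ⟨x, hx, rfl⟩
      exact conv_mono₂ C hC (hQ hx)
    · rcases C.coverE e with ⟨aₘ, rfl⟩ | hje'
      swap
      · exact absurd hje' hje
      have hao : ¬ G₁.OutputEdge aₘ := by
        intro ho
        obtain ⟨bₘ, -, heq⟩ := C.glueOut aₘ ho
        exact hje ⟨bₘ, heq.symm⟩
      rw [hI, C.tgt₁ aₘ hao, I_comp₁ C hP₂ hA₂ (fun hx => hao hx.1)]
      rintro _ ⟨x, hx, rfl⟩
      exact ⟨C.j₂ b₁, ⟨b₁, hb₁, rfl⟩, C.j₂ b₂, ⟨b₂, hb₂, rfl⟩,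
        Or.inl (S1L C hC hst hU₁.1 hAd₁ hao hx rfl h1),
        Or.inl (S1R C hC hst hU₁.1 hAd₁ hao hx rfl h2)⟩

theorem compQ2_ss
    (hP₁ : G₁.Progressive) (hA₁ : G₁.Acyclic) (hU₁ : G₁.UPO lt₁) (hAd₁ : G₁.Admissible lt₁)
    (hP₂ : G₂.Progressive) (hA₂ : G₂.Acyclic) (hU₂ : G₂.UPO lt₂) (hAd₂ : G₂.Admissible lt₂)
    (hst : IsStrictTotalOrder G.E lt) (hC : IsCompOrder C lt₁ lt₂ lt)
    {e₁ e e₂ : G.E} (h1 : lt e₁ e) (h2 : lt e e₂) (h : G.s e₁ = G.s e₂) :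
    G.O (G.s e) ⊆ G.conv lt (G.O (G.s e₁)) := by
  rcases C.coverV (G.s e₁) with ⟨v, hv, hkv⟩ | ⟨w, hw, hkw⟩
  · have hO : G.O (G.s e₁) = C.j₁ '' G₁.O v := by
      rw [← hkv]; exact O_comp₁ C hP₁ hA₁ hv
    have hm₁ : e₁ ∈ G.O (G.s e₁) := rfl
    have hm₂ : e₂ ∈ G.O (G.s e₁) := h.symm
    rw [hO] at hm₁ hm₂
    obtain ⟨a₁, ha₁, he₁⟩ := hm₁
    obtain ⟨a₂, ha₂, he₂⟩ := hm₂
    have ha₁' : G₁.s a₁ = v := ha₁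
    have ha₂' : G₁.s a₂ = v := ha₂
    rw [← he₁] at h1; rw [← he₂] at h2
    by_cases hje : ∃ aₘ, C.j₁ aₘ = e
    · obtain ⟨aₘ, rfl⟩ := hje
      have hlt1 : lt₁ a₁ aₘ := (hC.1 _ _).mpr h1
      have hlt2 : lt₁ aₘ a₂ := (hC.1 _ _).mpr h2
      have hQ := (hU₁.2.2 a₁ aₘ a₂ hlt1 hlt2).2.1 (ha₁'.trans ha₂'.symm)
      rw [ha₁'] at hQ
      rw [hO, C.src₁ aₘ, O_comp₁ C hP₁ hA₁ (PGraph.src_not_out hP₁ hA₁ aₘ)]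
      rintro _ ⟨x, hx, rfl⟩
      exact conv_mono₁ C hC (hQ hx)
    · rcases C.coverE e with hje' | ⟨bₘ, rfl⟩
      · exact absurd hje' hje
      have hbi : ¬ G₂.InputEdge bₘ := by
        intro hi
        obtain ⟨aₘ, -, heq⟩ := C.glueIn bₘ hi
        exact hje ⟨aₘ, heq⟩
      rw [hO, C.src₂ bₘ hbi, O_comp₂ C hP₁ hA₁ (fun hx => hbi hx.1)]
      rintro _ ⟨x, hx, rfl⟩
      exact ⟨C.j₁ a₁, ⟨a₁, ha₁, rfl⟩, C.j₁ a₂, ⟨a₂, ha₂, rfl⟩,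
        Or.inl (S2L C hC hst hU₂.1 hAd₂ hbi hx rfl h1),
        Or.inl (S2R C hC hst hU₂.1 hAd₂ hbi hx rfl h2)⟩
  · have hO : G.O (G.s e₁) = C.j₂ '' G₂.O w := by
      rw [← hkw]; exact O_comp₂ C hP₁ hA₁ hw
    have hm₁ : e₁ ∈ G.O (G.s e₁) := rfl
    have hm₂ : e₂ ∈ G.O (G.s e₁) := h.symm
    rw [hO] at hm₁ hm₂
    obtain ⟨b₁, hb₁, he₁⟩ := hm₁
    obtain ⟨b₂, hb₂, he₂⟩ := hm₂
    have hb₁' : G₂.s b₁ = w := hb₁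
    have hb₂' : G₂.s b₂ = w := hb₂
    have hwσ : w ∉ G₂.σ := fun hσ => hw ⟨hσ, b₁, hb₁'⟩
    rw [← he₁] at h1; rw [← he₂] at h2
    by_cases hje : ∃ aₘ, C.j₁ aₘ = e
    · obtain ⟨aₘ, rfl⟩ := hje
      exact absurd (V3 C hC hst hU₂.1 hAd₂ hwσ hb₁' hb₂' h1 h2) not_false
    · rcases C.coverE e with hje' | ⟨bₘ, rfl⟩
      · exact absurd hje' hje
      have hbi : ¬ G₂.InputEdge bₘ := by
        intro hi
        obtain ⟨aₘ, -, heq⟩ := C.glueIn bₘ hi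
        exact hje ⟨aₘ, heq⟩
      have hlt1 : lt₂ b₁ bₘ := (hC.2.1 _ _).mpr h1
      have hlt2 : lt₂ bₘ b₂ := (hC.2.1 _ _).mpr h2
      have hQ := (hU₂.2.2 b₁ bₘ b₂ hlt1 hlt2).2.1 (hb₁'.trans hb₂'.symm)
      rw [hb₁'] at hQ
      rw [hO, C.src₂ bₘ hbi, O_comp₂ C hP₁ hA₁ (fun hx => hbi hx.1)]
      rintro _ ⟨x, hx, rfl⟩
      exact conv_mono₂ C hC (hQ hx)

theorem compQ2_ts
    (hP₁ : G₁.Progressive) (hA₁ : G₁.Acyclic) (hU₁ : G₁.UPO lt₁) (hAd₁ : G₁.Admissible lt₁)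
    (hP₂ : G₂.Progressive) (hA₂ : G₂.Acyclic) (hU₂ : G₂.UPO lt₂) (hAd₂ : G₂.Admissible lt₂)
    (hst : IsStrictTotalOrder G.E lt) (hC : IsCompOrder C lt₁ lt₂ lt)
    {e₁ e e₂ : G.E} (h1 : lt e₁ e) (h2 : lt e e₂) (h : G.t e₁ = G.s e₂) :
    G.I (G.t e) ⊆ G.conv lt (G.I (G.t e₁)) ∨
      G.O (G.s e) ⊆ G.conv lt (G.O (G.s e₂)) := by
  rcases C.coverV (G.t e₁) with ⟨v, hv, hkv⟩ | ⟨w, hw, hkw⟩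
  · have hI : G.I (G.t e₁) = C.j₁ '' G₁.I v := by
      rw [← hkv]; exact I_comp₁ C hP₂ hA₂ hv
    have hO : G.O (G.s e₂) = C.j₁ '' G₁.O v := by
      rw [← h, ← hkv]; exact O_comp₁ C hP₁ hA₁ hv
    have hm₁ : e₁ ∈ G.I (G.t e₁) := rfl
    have hm₂ : e₂ ∈ G.O (G.s e₂) := rfl
    rw [hI] at hm₁; rw [hO] at hm₂
    obtain ⟨a₁, ha₁, he₁⟩ := hm₁
    obtain ⟨a₂, ha₂, he₂⟩ := hm₂
    have ha₁' : G₁.t a₁ = v := ha₁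
    have ha₂' : G₁.s a₂ = v := ha₂
    have hvσ : v ∉ G₁.σ := fun hσ => hv ⟨hσ, a₁, ha₁'⟩
    have ha₁o : ¬ G₁.OutputEdge a₁ := fun hx => hvσ (ha₁' ▸ hx)
    rw [← he₁] at h1; rw [← he₂] at h2
    by_cases hje : ∃ aₘ, C.j₁ aₘ = e
    · obtain ⟨aₘ, rfl⟩ := hje
      have hlt1 : lt₁ a₁ aₘ := (hC.1 _ _).mpr h1
      have hlt2 : lt₁ aₘ a₂ := (hC.1 _ _).mpr h2
      have hQ := (hU₁.2.2 a₁ aₘ a₂ hlt1 hlt2).2.2 (ha₁'.trans ha₂'.symm)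
      rcases hQ with hQ | hQ
      · by_cases hao : G₁.OutputEdge aₘ
        · rw [ha₁'] at hQ
          exact absurd ((hAd₁ v hvσ).2 aₘ hao (hQ rfl)) not_false
        · left
          rw [ha₁'] at hQ
          rw [hI, C.tgt₁ aₘ hao, I_comp₁ C hP₂ hA₂ (fun hx => hao hx.1)]
          rintro _ ⟨x, hx, rfl⟩
          exact conv_mono₁ C hC (hQ hx)
      · right
        rw [ha₂'] at hQ
        rw [hO, C.src₁ aₘ, O_comp₁ C hP₁ hA₁ (PGraph.src_not_out hP₁ hA₁ aₘ)]
        rintro _ ⟨x, hx, rfl⟩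
        exact conv_mono₁ C hC (hQ hx)
    · rcases C.coverE e with hje' | ⟨bₘ, rfl⟩
      · exact absurd hje' hje
      have hbi : ¬ G₂.InputEdge bₘ := by
        intro hi
        obtain ⟨aₘ, -, heq⟩ := C.glueIn bₘ hi
        exact hje ⟨aₘ, heq⟩
      -- the middle edge lives purely in G₂; prove the O-side inclusion
      obtain ⟨o, i, hglue, h_ao, h_ib⟩ := (mixed_iff C hC ha₁o hbi).mp h1
      have hoo : G₁.OutputEdge o := (C.glue _ _ hglue).1
      have hii : G₂.InputEdge i := (C.glue _ _ hglue).2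
      have hao1 : lt₁ a₁ o := sto_lt_of_le_ne h_ao (fun hx => ha₁o (hx ▸ hoo))
      have hilt : lt₂ i bₘ := sto_lt_of_le_ne h_ib (fun hx => hbi (hx ▸ hii))
      have holt : lt₁ o a₂ := by
        by_cases ha₂o : G₁.OutputEdge a₂
        · obtain ⟨i₂, hi₂, heq₂⟩ := C.glueOut a₂ ha₂o
          rw [heq₂] at h2
          have hbm2 : lt₂ bₘ i₂ := (hC.2.1 _ _).mpr h2
          have : lt₂ i i₂ := hU₂.1.trans _ _ _ hilt hbm2
          have : lt (C.j₂ i) (C.j₂ i₂) := (hC.2.1 _ _).mp this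
          rw [← hglue, ← heq₂] at this
          exact (hC.1 _ _).mpr this
        · have hnot : ¬ lt (C.j₁ a₂) (C.j₂ bₘ) := fun hx => sto_asymm hst hx h2
          rw [mixed_iff C hC ha₂o hbi] at hnot
          exact sto_lt_of_not_le hU₁.1 (fun hle => hnot ⟨o, i, hglue, hle, h_ib⟩)
      have hQ := (hU₁.2.2 a₁ o a₂ hao1 holt).2.2 (ha₁'.trans ha₂'.symm)
      rcases hQ with hQ | hQ
      · rw [ha₁'] at hQ
        exact absurd ((hAd₁ v hvσ).2 o hoo (hQ rfl)) not_false
      · rw [ha₂'] at hQ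
        obtain ⟨aℓ, haℓ, aᵣ, haᵣ, hlo, hor⟩ := hQ rfl
        right
        rw [hO, C.src₂ bₘ hbi, O_comp₂ C hP₁ hA₁ (fun hx => hbi hx.1)]
        rintro _ ⟨x, hx, rfl⟩
        have hlow : lt (C.j₁ aℓ) (C.j₂ bₘ) := by
          have hle : G.le lt (C.j₁ aℓ) (C.j₁ o) := (le₁_iff C hC _ _).mp hlo
          have hib' : lt (C.j₂ i) (C.j₂ bₘ) := (hC.2.1 _ _).mp hilt
          rw [← hglue] at hib'
          rcases hle with hle | hle
          · exact hst.trans _ _ _ hle hib'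
          · rw [hle]; exact hib'
        exact ⟨C.j₁ aℓ, ⟨aℓ, haℓ, rfl⟩, C.j₁ a₂, ⟨a₂, ha₂, rfl⟩,
          Or.inl (S2L C hC hst hU₂.1 hAd₂ hbi hx rfl hlow),
          Or.inl (S2R C hC hst hU₂.1 hAd₂ hbi hx rfl h2)⟩
  · have hI : G.I (G.t e₁) = C.j₂ '' G₂.I w := by
      rw [← hkw]; exact I_comp₂ C hP₂ hA₂ hw
    have hO : G.O (G.s e₂) = C.j₂ '' G₂.O w := by
      rw [← h, ← hkw]; exact O_comp₂ C hP₁ hA₁ hw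
    have hm₁ : e₁ ∈ G.I (G.t e₁) := rfl
    have hm₂ : e₂ ∈ G.O (G.s e₂) := rfl
    rw [hI] at hm₁; rw [hO] at hm₂
    obtain ⟨b₁, hb₁, he₁⟩ := hm₁
    obtain ⟨b₂, hb₂, he₂⟩ := hm₂
    have hb₁' : G₂.t b₁ = w := hb₁
    have hb₂' : G₂.s b₂ = w := hb₂
    have hwσ : w ∉ G₂.σ := fun hσ => hw ⟨hσ, b₂, hb₂'⟩
    have hb₂i : ¬ G₂.InputEdge b₂ := fun hx => hwσ (hb₂' ▸ hx)
    rw [← he₁] at h1; rw [← he₂] at h2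
    by_cases hje : ∃ bₘ, C.j₂ bₘ = e
    · obtain ⟨bₘ, rfl⟩ := hje
      have hlt1 : lt₂ b₁ bₘ := (hC.2.1 _ _).mpr h1
      have hlt2 : lt₂ bₘ b₂ := (hC.2.1 _ _).mpr h2
      have hQ := (hU₂.2.2 b₁ bₘ b₂ hlt1 hlt2).2.2 (hb₁'.trans hb₂'.symm)
      rcases hQ with hQ | hQ
      · left
        rw [hb₁'] at hQ
        rw [hI, C.tgt₂ bₘ, I_comp₂ C hP₂ hA₂ (PGraph.tgt_not_in hP₂ hA₂ bₘ)]
        rintro _ ⟨x, hx, rfl⟩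
        exact conv_mono₂ C hC (hQ hx)
      · by_cases hbmi : G₂.InputEdge bₘ
        · rw [hb₂'] at hQ
          exact absurd ((hAd₂ w hwσ).1 bₘ hbmi (hQ rfl)) not_false
        · right
          rw [hb₂'] at hQ
          rw [hO, C.src₂ bₘ hbmi, O_comp₂ C hP₁ hA₁ (fun hx => hbmi hx.1)]
          rintro _ ⟨x, hx, rfl⟩
          exact conv_mono₂ C hC (hQ hx)
    · rcases C.coverE e with ⟨aₘ, rfl⟩ | hje'
      swap
      · exact absurd hje' hje
      have hao : ¬ G₁.OutputEdge aₘ := by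
        intro ho
        obtain ⟨bₘ, -, heq⟩ := C.glueOut aₘ ho
        exact hje ⟨bₘ, heq.symm⟩
      -- the middle edge lives purely in G₁; prove the I-side inclusion
      obtain ⟨o, i, hglue, h_ao, h_ib⟩ := (mixed_iff C hC hao hb₂i).mp h2
      have hoo : G₁.OutputEdge o := (C.glue _ _ hglue).1
      have hii : G₂.InputEdge i := (C.glue _ _ hglue).2
      have hao1 : lt₁ aₘ o := sto_lt_of_le_ne h_ao (fun hx => hao (hx ▸ hoo))
      have hilt : lt₂ i b₂ := sto_lt_of_le_ne h_ib (fun hx => hb₂i (hx ▸ hii))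
      have hb₁lt : lt₂ b₁ i := by
        by_cases hb₁i : G₂.InputEdge b₁
        · obtain ⟨o₁, ho₁, heq₁⟩ := C.glueIn b₁ hb₁i
          rw [← heq₁] at h1
          have h1' : lt₁ o₁ aₘ := (hC.1 _ _).mpr h1
          have : lt₁ o₁ o := hU₁.1.trans _ _ _ h1' hao1
          have : lt (C.j₁ o₁) (C.j₁ o) := (hC.1 _ _).mp this
          rw [heq₁, hglue] at this
          exact (hC.2.1 _ _).mpr this
        · have hnot : ¬ lt (C.j₁ aₘ) (C.j₂ b₁) := fun hx => sto_asymm hst hx h1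
          rw [mixed_iff C hC hao hb₁i] at hnot
          exact sto_lt_of_not_le hU₂.1 (fun hle => hnot ⟨o, i, hglue, h_ao, hle⟩)
      have hQ := (hU₂.2.2 b₁ i b₂ hb₁lt hilt).2.2 (hb₁'.trans hb₂'.symm)
      rcases hQ with hQ | hQ
      swap
      · rw [hb₂'] at hQ
        exact absurd ((hAd₂ w hwσ).1 i hii (hQ rfl)) not_false
      rw [hb₁'] at hQ
      obtain ⟨bℓ, hbℓ, bᵣ, hbᵣ, hli, hir⟩ := hQ rfl
      left
      rw [hI, C.tgt₁ aₘ hao, I_comp₁ C hP₂ hA₂ (fun hx => hao hx.1)]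
      rintro _ ⟨x, hx, rfl⟩
      have hup : lt (C.j₁ aₘ) (C.j₂ bᵣ) := by
        have hle : G.le lt (C.j₂ i) (C.j₂ bᵣ) := (le₂_iff C hC _ _).mp hir
        have hmo : lt (C.j₁ aₘ) (C.j₂ i) := by
          rw [← hglue]; exact (hC.1 _ _).mp hao1
        rcases hle with hle | hle
        · exact hst.trans _ _ _ hmo hle
        · rw [← hle]; exact hmo
      have hxr : lt (C.j₁ x) (C.j₂ bᵣ) := S1R C hC hst hU₁.1 hAd₁ hao hx rfl hup
      rcases (haveI := hst; trichotomous_of lt (C.j₂ bℓ) (C.j₁ aₘ)) with hc | hc | hc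
      · exact ⟨C.j₂ bℓ, ⟨bℓ, hbℓ, rfl⟩, C.j₂ bᵣ, ⟨bᵣ, hbᵣ, rfl⟩,
          Or.inl (S1L C hC hst hU₁.1 hAd₁ hao hx rfl hc), Or.inl hxr⟩
      · exact absurd (C.glue _ _ hc.symm).1 hao
      · exact ⟨C.j₂ b₁, ⟨b₁, hb₁, rfl⟩, C.j₂ bᵣ, ⟨bᵣ, hbᵣ, rfl⟩,
          Or.inl (S1L C hC hst hU₁.1 hAd₁ hao hx rfl h1), Or.inl hxr⟩

theorem step_cases (hP₁ : G₁.Progressive) (hA₁ : G₁.Acyclic)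
    (hP₂ : G₂.Progressive) (hA₂ : G₂.Acyclic) {e f : G.E} (hstep : G.step e f) :
    (∃ a a', C.j₁ a = e ∧ C.j₁ a' = f ∧ G₁.step a a') ∨
    (∃ b b', C.j₂ b = e ∧ C.j₂ b' = f ∧ G₂.step b b') := by
  have hef : G.t e = G.s f := hstep
  by_cases h2 : ∃ b, C.j₂ b = e
  · obtain ⟨b, rfl⟩ := h2
    right
    rw [C.tgt₂ b] at hef
    by_cases hf : ∃ b', C.j₂ b' = f
    · obtain ⟨b', rfl⟩ := hf
      by_cases hb' : G₂.InputEdge b'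
      · obtain ⟨a', -, heq⟩ := C.glueIn b' hb'
        rw [← heq, C.src₁ a'] at hef
        exact absurd hef.symm
          (C.disjV _ _ (PGraph.src_not_out hP₁ hA₁ a') (PGraph.tgt_not_in hP₂ hA₂ b))
      · rw [C.src₂ b' hb'] at hef
        exact ⟨b, b', rfl, rfl,
          C.injV₂ _ _ (PGraph.tgt_not_in hP₂ hA₂ b) (fun hx => hb' hx.1) hef⟩
    · rcases C.coverE f with ⟨a', rfl⟩ | h'
      · rw [C.src₁ a'] at hef
        exact absurd hef.symm
          (C.disjV _ _ (PGraph.src_not_out hP₁ hA₁ a') (PGraph.tgt_not_in hP₂ hA₂ b))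
      · exact absurd h' hf
  · left
    rcases C.coverE e with ⟨a, rfl⟩ | h'
    swap
    · exact absurd h' h2
    have hao : ¬ G₁.OutputEdge a := by
      intro ho
      obtain ⟨b, -, heq⟩ := C.glueOut a ho
      exact h2 ⟨b, heq.symm⟩
    rw [C.tgt₁ a hao] at hef
    by_cases hf : ∃ a', C.j₁ a' = f
    · obtain ⟨a', rfl⟩ := hf
      rw [C.src₁ a'] at hef
      exact ⟨a, a', rfl, rfl,
        C.injV₁ _ _ (fun hx => hao hx.1) (PGraph.src_not_out hP₁ hA₁ a') hef⟩
    · rcases C.coverE f with h' | ⟨b', rfl⟩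
      · exact absurd h' hf
      have hbi : ¬ G₂.InputEdge b' := by
        intro hi
        obtain ⟨a', -, heq⟩ := C.glueIn b' hi
        exact hf ⟨a', heq⟩
      rw [C.src₂ b' hbi] at hef
      exact absurd hef (C.disjV _ _ (fun hx => hao hx.1) (fun hx => hbi hx.1))

theorem comp_acyclic (hP₁ : G₁.Progressive) (hA₁ : G₁.Acyclic) (hU₁ : G₁.UPO lt₁)
    (hP₂ : G₂.Progressive) (hA₂ : G₂.Acyclic) (hU₂ : G₂.UPO lt₂)
    (hst : IsStrictTotalOrder G.E lt) (hC : IsCompOrder C lt₁ lt₂ lt) : G.Acyclic := by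
  have noswitch : ∀ (a a' : G₁.E) (b : G₂.E), C.j₂ b = C.j₁ a → G₁.step a a' → False := by
    intro a a' b heq hstep
    have ho : G₁.OutputEdge a := (C.glue a b heq.symm).1
    exact PGraph.src_not_out hP₁ hA₁ a' ⟨hstep ▸ ho, a, hstep⟩
  have key : ∀ e f, Relation.TransGen G.step e f →
      (∃ b b', C.j₂ b = e ∧ C.j₂ b' = f ∧ Relation.TransGen G₂.step b b') ∨
      (∃ a a', C.j₁ a = e ∧ C.j₁ a' = f ∧ Relation.TransGen G₁.step a a') ∨
      (∃ a a' b b', C.j₁ a = e ∧ C.j₂ b' = f ∧ C.j₁ a' = C.j₂ b ∧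
        Relation.TransGen G₁.step a a' ∧ Relation.TransGen G₂.step b b') := by
    intro e f h
    induction h with
    | single hstep =>
        rcases step_cases C hP₁ hA₁ hP₂ hA₂ hstep with ⟨a, a', h1, h2, h3⟩ | ⟨b, b', h1, h2, h3⟩
        · exact Or.inr (Or.inl ⟨a, a', h1, h2, Relation.TransGen.single h3⟩)
        · exact Or.inl ⟨b, b', h1, h2, Relation.TransGen.single h3⟩
    | tail hsteps hstep ih =>
        rcases ih with ⟨b, b', hb, hb', ht⟩ | ⟨a, a', ha, ha', ht⟩ |
          ⟨a, a', b, b', ha, hb', hglue, ht1, ht2⟩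
        · rcases step_cases C hP₁ hA₁ hP₂ hA₂ hstep with ⟨aa, aa', h1, h2, h3⟩ | ⟨bb, bb', h1, h2, h3⟩
          · exact absurd (noswitch aa aa' b' (hb'.trans h1.symm) h3) not_false
          · have : bb = b' := C.inj₂ (h1.trans hb'.symm)
            subst this
            exact Or.inl ⟨b, bb', hb, h2, ht.tail h3⟩
        · rcases step_cases C hP₁ hA₁ hP₂ hA₂ hstep with ⟨aa, aa', h1, h2, h3⟩ | ⟨bb, bb', h1, h2, h3⟩
          · have : aa = a' := C.inj₁ (h1.trans ha'.symm)
            subst this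
            exact Or.inr (Or.inl ⟨a, aa', ha, h2, ht.tail h3⟩)
          · exact Or.inr (Or.inr ⟨a, a', bb, bb', ha, h2, ha'.trans h1.symm, ht,
              Relation.TransGen.single h3⟩)
        · rcases step_cases C hP₁ hA₁ hP₂ hA₂ hstep with ⟨aa, aa', h1, h2, h3⟩ | ⟨bb, bb', h1, h2, h3⟩
          · exact absurd (noswitch aa aa' b' (hb'.trans h1.symm) h3) not_false
          · have : bb = b' := C.inj₂ (h1.trans hb'.symm)
            subst this
            exact Or.inr (Or.inr ⟨a, a', b, bb', ha, h2, hglue, ht1, ht2.tail h3⟩)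
  intro e h
  rcases key e e h with ⟨b, b', hb, hb', ht⟩ | ⟨a, a', ha, ha', ht⟩ |
    ⟨a, a', b, b', ha, hb', hglue, ht1, ht2⟩
  · have : b = b' := C.inj₂ (hb.trans hb'.symm)
    exact hA₂ b (this ▸ ht)
  · have : a = a' := C.inj₁ (ha.trans ha'.symm)
    exact hA₁ a (this ▸ ht)
  · have hne₁ : a ≠ a' := fun hx => hA₁ a (hx ▸ ht1)
    have hne₂ : b ≠ b' := fun hx => hA₂ b (hx ▸ ht2)
    have hl₁ : lt₁ a a' := (hU₁.2.1 a a' ht1.to_reflTransGen).resolve_right hne₁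
    have hl₂ : lt₂ b b' := (hU₂.2.1 b b' ht2.to_reflTransGen).resolve_right hne₂
    have hg1 : lt e (C.j₂ b) := by
      have := (hC.1 a a').mp hl₁
      rw [ha, hglue] at this
      exact this
    have hg2 : lt (C.j₂ b) e := by
      have := (hC.2.1 b b').mp hl₂
      rw [hb'] at this
      exact this
    exact sto_asymm hst hg1 hg2

theorem comp_q1 (hP₁ : G₁.Progressive) (hA₁ : G₁.Acyclic) (hU₁ : G₁.UPO lt₁)
    (hP₂ : G₂.Progressive) (hA₂ : G₂.Acyclic) (hU₂ : G₂.UPO lt₂)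
    (hst : IsStrictTotalOrder G.E lt) (hC : IsCompOrder C lt₁ lt₂ lt) : G.Q1 lt := by
  intro e f h
  induction h with
  | refl => exact Or.inr rfl
  | tail hsteps hstep ih =>
      rename_i f' g'
      have hle : G.le lt f' g' := by
        rcases step_cases C hP₁ hA₁ hP₂ hA₂ hstep with ⟨a, a', h1, h2, h3⟩ | ⟨b, b', h1, h2, h3⟩
        · rw [← h1, ← h2]
          exact (le₁_iff C hC a a').mp (hU₁.2.1 a a' (Relation.ReflTransGen.single h3))
        · rw [← h1, ← h2]
          exact (le₂_iff C hC b b').mp (hU₂.2.1 b b' (Relation.ReflTransGen.single h3))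
      rcases ih with ih | ih
      · rcases hle with hle | hle
        · exact Or.inl (hst.trans _ _ _ ih hle)
        · exact Or.inl (hle ▸ ih)
      · rw [ih]
        exact hle

theorem comp_progressive (C : CompData G₁ G₂ G) (hP₁ : G₁.Progressive) (hA₁ : G₁.Acyclic)
    (hP₂ : G₂.Progressive) (hA₂ : G₂.Acyclic) : G.Progressive := by
  intro u hu
  rcases (C.bdry u).mp hu with ⟨v, hv, hkv⟩ | ⟨w, hw, hkw⟩
  · obtain ⟨hσ, a, ha⟩ := hv
    have hvo : ¬ G₁.OutputVertex v := ha ▸ PGraph.src_not_out hP₁ hA₁ a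
    refine ⟨C.j₁ a, Or.inl (by rw [C.src₁ a, ha, hkv]), ?_⟩
    intro e' he'
    by_cases hj : ∃ a', C.j₁ a' = e'
    · obtain ⟨a', rfl⟩ := hj
      rcases he' with he' | he'
      · rw [C.src₁ a', ← hkv] at he'
        have h' : G₁.s a' = v := C.injV₁ _ _ (PGraph.src_not_out hP₁ hA₁ a') hvo he'
        rw [PGraph.end_unique hP₁ hσ (Or.inl h') (Or.inl ha)]
      · by_cases ho : G₁.OutputEdge a'
        · obtain ⟨b', -, heq⟩ := C.glueOut a' ho
          rw [heq, C.tgt₂ b', ← hkv] at he'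
          exact absurd he'.symm (C.disjV _ _ hvo (PGraph.tgt_not_in hP₂ hA₂ b'))
        · rw [C.tgt₁ a' ho, ← hkv] at he'
          have h' : G₁.t a' = v := C.injV₁ _ _ (fun hx => ho hx.1) hvo he'
          have h'' : a' = a := PGraph.end_unique hP₁ hσ (Or.inr h') (Or.inl ha)
          subst h''
          exact absurd (Relation.TransGen.single
            (show G₁.step a' a' from h'.trans ha.symm)) (hA₁ a')
    · rcases C.coverE e' with h' | ⟨b', rfl⟩
      · exact absurd h' hj
      have hbi : ¬ G₂.InputEdge b' := by
        intro hi
        obtain ⟨a', -, heq⟩ := C.glueIn b' hi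
        exact hj ⟨a', heq⟩
      rcases he' with he' | he'
      · rw [C.src₂ b' hbi, ← hkv] at he'
        exact absurd he'.symm (C.disjV _ _ hvo (fun hx => hbi hx.1))
      · rw [C.tgt₂ b', ← hkv] at he'
        exact absurd he'.symm (C.disjV _ _ hvo (PGraph.tgt_not_in hP₂ hA₂ b'))
  · obtain ⟨hσ, b, hb⟩ := hw
    have hwi : ¬ G₂.InputVertex w := hb ▸ PGraph.tgt_not_in hP₂ hA₂ b
    refine ⟨C.j₂ b, Or.inr (by rw [C.tgt₂ b, hb, hkw]), ?_⟩
    intro e' he'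
    by_cases hj : ∃ b', C.j₂ b' = e'
    · obtain ⟨b', rfl⟩ := hj
      rcases he' with he' | he'
      · by_cases hi : G₂.InputEdge b'
        · obtain ⟨a', -, heq⟩ := C.glueIn b' hi
          rw [← heq, C.src₁ a', ← hkw] at he'
          exact absurd he' (C.disjV _ _ (PGraph.src_not_out hP₁ hA₁ a') hwi)
        · rw [C.src₂ b' hi, ← hkw] at he'
          have h' : G₂.s b' = w := C.injV₂ _ _ (fun hx => hi hx.1) hwi he'
          have h'' : b' = b := PGraph.end_unique hP₂ hσ (Or.inl h') (Or.inr hb)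
          subst h''
          exact absurd (Relation.TransGen.single
            (show G₂.step b' b' from hb.trans h'.symm)) (hA₂ b')
      · rw [C.tgt₂ b', ← hkw] at he'
        have h' : G₂.t b' = w := C.injV₂ _ _ (PGraph.tgt_not_in hP₂ hA₂ b') hwi he'
        rw [PGraph.end_unique hP₂ hσ (Or.inr h') (Or.inr hb)]
    · rcases C.coverE e' with ⟨a', rfl⟩ | h'
      swap
      · exact absurd h' hj
      have hao : ¬ G₁.OutputEdge a' := by
        intro ho
        obtain ⟨b', -, heq⟩ := C.glueOut a' ho
        exact hj ⟨b', heq.symm⟩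
      rcases he' with he' | he'
      · rw [C.src₁ a', ← hkw] at he'
        exact absurd he' (C.disjV _ _ (PGraph.src_not_out hP₁ hA₁ a') hwi)
      · rw [C.tgt₁ a' hao, ← hkw] at he'
        exact absurd he' (C.disjV _ _ (fun hx => hao hx.1) hwi)

theorem inputEdge_comp (hP₁ : G₁.Progressive) (hA₁ : G₁.Acyclic)
    (hP₂ : G₂.Progressive) (hA₂ : G₂.Acyclic) {e : G.E} (he : G.InputEdge e) :
    ∃ a, C.j₁ a = e ∧ G₁.InputEdge a := by
  have hσ := (C.bdry (G.s e)).mp he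
  by_cases hj : ∃ a, C.j₁ a = e
  · obtain ⟨a, rfl⟩ := hj
    rcases hσ with ⟨v₀, hv₀, hk⟩ | ⟨w₀, hw₀, hk⟩
    · obtain ⟨hσ₀, a₀, ha₀⟩ := hv₀
      have hvo : ¬ G₁.OutputVertex v₀ := ha₀ ▸ PGraph.src_not_out hP₁ hA₁ a₀
      rw [C.src₁ a] at hk
      have h' : G₁.s a = v₀ := C.injV₁ _ _ (PGraph.src_not_out hP₁ hA₁ a) hvo hk.symm
      exact ⟨a, rfl, show G₁.s a ∈ G₁.σ by rw [h']; exact hσ₀⟩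
    · obtain ⟨hσ₀, b₀, hb₀⟩ := hw₀
      have hwi : ¬ G₂.InputVertex w₀ := hb₀ ▸ PGraph.tgt_not_in hP₂ hA₂ b₀
      rw [C.src₁ a] at hk
      exact absurd hk.symm (C.disjV _ _ (PGraph.src_not_out hP₁ hA₁ a) hwi)
  · rcases C.coverE e with h' | ⟨b, rfl⟩
    · exact absurd h' hj
    have hbi : ¬ G₂.InputEdge b := by
      intro hi
      obtain ⟨a, -, heq⟩ := C.glueIn b hi
      exact hj ⟨a, heq⟩
    rw [C.src₂ b hbi] at hσ
    rcases hσ with ⟨v₀, hv₀, hk⟩ | ⟨w₀, hw₀, hk⟩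
    · obtain ⟨hσ₀, a₀, ha₀⟩ := hv₀
      have hvo : ¬ G₁.OutputVertex v₀ := ha₀ ▸ PGraph.src_not_out hP₁ hA₁ a₀
      exact absurd hk (C.disjV _ _ hvo (fun hx => hbi hx.1))
    · obtain ⟨hσ₀, b₀, hb₀⟩ := hw₀
      have hwi : ¬ G₂.InputVertex w₀ := hb₀ ▸ PGraph.tgt_not_in hP₂ hA₂ b₀
      have h' : G₂.s b = w₀ := C.injV₂ _ _ (fun hx => hbi hx.1) hwi hk.symm
      exact absurd (show G₂.s b ∈ G₂.σ by rw [h']; exact hσ₀) hbi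

theorem outputEdge_comp (hP₁ : G₁.Progressive) (hA₁ : G₁.Acyclic)
    (hP₂ : G₂.Progressive) (hA₂ : G₂.Acyclic) {e : G.E} (he : G.OutputEdge e) :
    ∃ b, C.j₂ b = e ∧ G₂.OutputEdge b := by
  have hσ := (C.bdry (G.t e)).mp he
  by_cases hj : ∃ b, C.j₂ b = e
  · obtain ⟨b, rfl⟩ := hj
    rcases hσ with ⟨v₀, hv₀, hk⟩ | ⟨w₀, hw₀, hk⟩
    · obtain ⟨hσ₀, a₀, ha₀⟩ := hv₀
      have hvo : ¬ G₁.OutputVertex v₀ := ha₀ ▸ PGraph.src_not_out hP₁ hA₁ a₀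
      rw [C.tgt₂ b] at hk
      exact absurd hk (C.disjV _ _ hvo (PGraph.tgt_not_in hP₂ hA₂ b))
    · obtain ⟨hσ₀, b₀, hb₀⟩ := hw₀
      have hwi : ¬ G₂.InputVertex w₀ := hb₀ ▸ PGraph.tgt_not_in hP₂ hA₂ b₀
      rw [C.tgt₂ b] at hk
      have h' : G₂.t b = w₀ := C.injV₂ _ _ (PGraph.tgt_not_in hP₂ hA₂ b) hwi hk.symm
      exact ⟨b, rfl, show G₂.t b ∈ G₂.σ by rw [h']; exact hσ₀⟩
  · rcases C.coverE e with ⟨a, rfl⟩ | h'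
    swap
    · exact absurd h' hj
    have hao : ¬ G₁.OutputEdge a := by
      intro ho
      obtain ⟨b, -, heq⟩ := C.glueOut a ho
      exact hj ⟨b, heq.symm⟩
    rw [C.tgt₁ a hao] at hσ
    rcases hσ with ⟨v₀, hv₀, hk⟩ | ⟨w₀, hw₀, hk⟩
    · obtain ⟨hσ₀, a₀, ha₀⟩ := hv₀
      have hvo : ¬ G₁.OutputVertex v₀ := ha₀ ▸ PGraph.src_not_out hP₁ hA₁ a₀
      have h' : G₁.t a = v₀ := C.injV₁ _ _ (fun hx => hao hx.1) hvo hk.symm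
      exact absurd (show G₁.t a ∈ G₁.σ by rw [h']; exact hσ₀) hao
    · obtain ⟨hσ₀, b₀, hb₀⟩ := hw₀
      have hwi : ¬ G₂.InputVertex w₀ := hb₀ ▸ PGraph.tgt_not_in hP₂ hA₂ b₀
      exact absurd hk.symm (C.disjV _ _ (fun hx => hao hx.1) hwi)

theorem inner_rep (hP₁ : G₁.Progressive) (hP₂ : G₂.Progressive)
    {u : G.V} (hu : u ∉ G.σ) :
    (∃ v, ¬ G₁.OutputVertex v ∧ v ∉ G₁.σ ∧ C.k₁ v = u) ∨
    (∃ w, ¬ G₂.InputVertex w ∧ w ∉ G₂.σ ∧ C.k₂ w = u) := by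
  rcases C.coverV u with ⟨v, hv, hk⟩ | ⟨w, hw, hk⟩
  · left
    refine ⟨v, hv, ?_, hk⟩
    intro hσ
    obtain ⟨e, he, -⟩ := hP₁ v hσ
    rcases he with he | he
    · exact hu ((C.bdry u).mpr (Or.inl ⟨v, ⟨hσ, e, he⟩, hk⟩))
    · exact hv ⟨hσ, e, he⟩
  · right
    refine ⟨w, hw, ?_, hk⟩
    intro hσ
    obtain ⟨e, he, -⟩ := hP₂ w hσ
    rcases he with he | he
    · exact hw ⟨hσ, e, he⟩
    · exact hu ((C.bdry u).mpr (Or.inr ⟨w, ⟨hσ, e, he⟩, hk⟩))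

theorem comp_admissible (hP₁ : G₁.Progressive) (hA₁ : G₁.Acyclic)
    (hU₁ : G₁.UPO lt₁) (hAd₁ : G₁.Admissible lt₁)
    (hP₂ : G₂.Progressive) (hA₂ : G₂.Acyclic) (hU₂ : G₂.UPO lt₂) (hAd₂ : G₂.Admissible lt₂)
    (hst : IsStrictTotalOrder G.E lt) (hC : IsCompOrder C lt₁ lt₂ lt) :
    G.Admissible lt := by
  intro u hu
  rcases inner_rep C hP₁ hP₂ hu with ⟨v, hv, hvσ, hk⟩ | ⟨w, hw, hwσ, hk⟩
  · constructor
    · intro e he hconv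
      obtain ⟨a, rfl, hai⟩ := inputEdge_comp C hP₁ hA₁ hP₂ hA₂ he
      rw [← hk, O_comp₁ C hP₁ hA₁ hv] at hconv
      exact (hAd₁ v hvσ).1 a hai (conv_refl₁ C hC hconv)
    · intro e he hconv
      obtain ⟨b, rfl, hbo⟩ := outputEdge_comp C hP₁ hA₁ hP₂ hA₂ he
      rw [← hk, I_comp₁ C hP₂ hA₂ hv] at hconv
      obtain ⟨x, ⟨aℓ, haℓ, rfl⟩, y, ⟨aᵣ, haᵣ, rfl⟩, hl, hr⟩ := hconv
      have haℓ' : G₁.t aℓ = v := haℓ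
      have haᵣ' : G₁.t aᵣ = v := haᵣ
      have hℓo : ¬ G₁.OutputEdge aℓ := fun hx => hvσ (haℓ' ▸ hx)
      have hᵣo : ¬ G₁.OutputEdge aᵣ := fun hx => hvσ (haᵣ' ▸ hx)
      by_cases hbi : G₂.InputEdge b
      · obtain ⟨o, hoo, heq⟩ := C.glueIn b hbi
        rw [← heq] at hl hr
        exact (hAd₁ v hvσ).2 o hoo ⟨aℓ, haℓ, aᵣ, haᵣ,
          (le₁_iff C hC _ _).mpr hl, (le₁_iff C hC _ _).mpr hr⟩
      · have hl' : lt (C.j₁ aℓ) (C.j₂ b) := hl.resolve_right (not_glued₁ C hℓo b)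
        have hr' : lt (C.j₂ b) (C.j₁ aᵣ) :=
          hr.resolve_right (fun hx => not_glued₁ C hᵣo b hx.symm)
        obtain ⟨o, i, hglue, hlo, hib⟩ := (mixed_iff C hC hℓo hbi).mp hl'
        have hoo := (C.glue _ _ hglue).1
        have hnot : ¬ lt (C.j₁ aᵣ) (C.j₂ b) := fun hx => sto_asymm hst hx hr'
        rw [mixed_iff C hC hᵣo hbi] at hnot
        have hor : lt₁ o aᵣ := sto_lt_of_not_le hU₁.1 (fun hle => hnot ⟨o, i, hglue, hle, hib⟩)
        exact (hAd₁ v hvσ).2 o hoo ⟨aℓ, haℓ, aᵣ, haᵣ, hlo, Or.inl hor⟩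
  · constructor
    · intro e he hconv
      obtain ⟨a, rfl, hai⟩ := inputEdge_comp C hP₁ hA₁ hP₂ hA₂ he
      rw [← hk, O_comp₂ C hP₁ hA₁ hw] at hconv
      obtain ⟨x, ⟨bℓ, hbℓ, rfl⟩, y, ⟨bᵣ, hbᵣ, rfl⟩, hl, hr⟩ := hconv
      have hbℓ' : G₂.s bℓ = w := hbℓ
      have hbᵣ' : G₂.s bᵣ = w := hbᵣ
      have hℓi : ¬ G₂.InputEdge bℓ := fun hx => hwσ (hbℓ' ▸ hx)
      have hᵣi : ¬ G₂.InputEdge bᵣ := fun hx => hwσ (hbᵣ' ▸ hx)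
      by_cases hao : G₁.OutputEdge a
      · obtain ⟨i₀, hi₀, heq⟩ := C.glueOut a hao
        rw [heq] at hl hr
        exact (hAd₂ w hwσ).1 i₀ hi₀ ⟨bℓ, hbℓ, bᵣ, hbᵣ,
          (le₂_iff C hC _ _).mpr hl, (le₂_iff C hC _ _).mpr hr⟩
      · have hl' : lt (C.j₂ bℓ) (C.j₁ a) := hl.resolve_right (not_glued₂ C hℓi a)
        have hr' : lt (C.j₁ a) (C.j₂ bᵣ) :=
          hr.resolve_right (fun hx => not_glued₂ C hᵣi a hx.symm)
        obtain ⟨o, i, hglue, hao', hir⟩ := (mixed_iff C hC hao hᵣi).mp hr'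
        have hii := (C.glue _ _ hglue).2
        have hnot : ¬ lt (C.j₁ a) (C.j₂ bℓ) := fun hx => sto_asymm hst hx hl'
        rw [mixed_iff C hC hao hℓi] at hnot
        have hbl : lt₂ bℓ i := sto_lt_of_not_le hU₂.1 (fun hle => hnot ⟨o, i, hglue, hao', hle⟩)
        exact (hAd₂ w hwσ).1 i hii ⟨bℓ, hbℓ, bᵣ, hbᵣ, Or.inl hbl, hir⟩
    · intro e he hconv
      obtain ⟨b, rfl, hbo⟩ := outputEdge_comp C hP₁ hA₁ hP₂ hA₂ he
      rw [← hk, I_comp₂ C hP₂ hA₂ hw] at hconv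
      exact (hAd₂ w hwσ).2 b hbo (conv_refl₂ C hC hconv)

end CompProof

end Helpers

/-- Main theorem: the composition of two admissible UPO-graphs is an admissible
UPO-graph. -/
theorem comp_admissible_UPO (G₁ G₂ G : PGraph)
    [Fintype G₁.E] [Fintype G₂.E] [Fintype G.E]
    (lt₁ : G₁.E → G₁.E → Prop) (lt₂ : G₂.E → G₂.E → Prop) (lt : G.E → G.E → Prop)
    (hP₁ : G₁.Progressive) (hA₁ : G₁.Acyclic) (hU₁ : G₁.UPO lt₁) (hAd₁ : G₁.Admissible lt₁)
    (hP₂ : G₂.Progressive) (hA₂ : G₂.Acyclic) (hU₂ : G₂.UPO lt₂) (hAd₂ : G₂.Admissible lt₂)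
    (C : CompData G₁ G₂ G) (hst : IsStrictTotalOrder G.E lt)
    (hC : IsCompOrder C lt₁ lt₂ lt) :
    G.Progressive ∧ G.Acyclic ∧ G.UPO lt ∧ G.Admissible lt := by
  refine ⟨comp_progressive C hP₁ hA₁ hP₂ hA₂,
    comp_acyclic C hP₁ hA₁ hU₁ hP₂ hA₂ hU₂ hst hC,
    ⟨hst, comp_q1 C hP₁ hA₁ hU₁ hP₂ hA₂ hU₂ hst hC, ?_⟩,
    comp_admissible C hP₁ hA₁ hU₁ hAd₁ hP₂ hA₂ hU₂ hAd₂ hst hC⟩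
  intro e₁ e e₂ h1 h2
  exact ⟨compQ2_tt C hP₁ hA₁ hU₁ hAd₁ hP₂ hA₂ hU₂ hAd₂ hst hC h1 h2,
    compQ2_ss C hP₁ hA₁ hU₁ hAd₁ hP₂ hA₂ hU₂ hAd₂ hst hC h1 h2,
    compQ2_ts C hP₁ hA₁ hU₁ hAd₁ hP₂ hA₂ hU₂ hAd₂ hst hC h1 h2⟩
end

section
/- Let G be a finite acyclic directed graph with upward planar order ≺, and let v be a processive vertex. If e₁ ≺ e ≺ e₂ with t(e₁) = s(e₂) = v, then either e₁ ≺ e ⪯ I(v)⁺ or O(v)⁻ ⪯ e ≺ e₂; i.e., the interval [e₁, e₂] is the disjoint union [e₁, I(v)⁺] ⊔ [O(v)⁻, e₂]. -/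
structure Digraph' (V E : Type) where
  s : E → V
  t : E → V

def conv {E : Type} [LinearOrder E] (X : Set E) : Set E :=
  {y | ∃ a ∈ X, ∃ b ∈ X, a ≤ y ∧ y ≤ b}

namespace Digraph'

variable {V E : Type} (G : Digraph' V E)

/-- One edge can be followed by another. -/
def step (e f : E) : Prop := G.t e = G.s f

/-- The reachable order: a directed path starts with `e₁` and ends with `e₂`
(including the case `e₁ = e₂`). -/
def reach : E → E → Prop := Relation.ReflTransGen G.step

/-- No directed cycles. -/
def Acyclic : Prop := ∀ e, ¬ Relation.TransGen G.step e e

/-- Incoming edges of a vertex. -/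
def I (v : V) : Set E := {e | G.t e = v}

/-- Outgoing edges of a vertex. -/
def O (v : V) : Set E := {e | G.s e = v}

/-- All edges incident to a vertex `v` (incoming or outgoing). -/
def Ev (v : V) : Set E := G.I v ∪ G.O v

variable [LinearOrder E]

/-- (U₁): reachability implies order. -/
def U1 : Prop := ∀ e₁ e₂ : E, G.reach e₁ e₂ → e₁ ≤ e₂

/-- (U₂): for every vertex, the hulls of incoming and outgoing edges are disjoint and
together give the hull of all incident edges. -/
def U2 : Prop := ∀ v : V,
  conv (G.I v) ∩ conv (G.O v) = ∅ ∧ conv (G.Ev v) = conv (G.I v) ∪ conv (G.O v)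

/-- (U₃). -/
def U3 : Prop := ∀ v₁ v₂ : V,
  ((G.I v₁ ∩ conv (G.I v₂)).Nonempty → conv (G.I v₁) ⊆ conv (G.I v₂)) ∧
  ((G.O v₁ ∩ conv (G.O v₂)).Nonempty → conv (G.O v₁) ⊆ conv (G.O v₂))

/-- (Q₂), the nesting condition. -/
def Q2 : Prop := ∀ e₁ e e₂ : E, e₁ < e → e < e₂ →
  (G.t e₁ = G.t e₂ → G.I (G.t e) ⊆ conv (G.I (G.t e₁))) ∧
  (G.s e₁ = G.s e₂ → G.O (G.s e) ⊆ conv (G.O (G.s e₁))) ∧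
  (G.t e₁ = G.s e₂ →
    G.I (G.t e) ⊆ conv (G.I (G.t e₁)) ∨ G.O (G.s e) ⊆ conv (G.O (G.s e₂)))

end Digraph'

theorem mem_conv_of_le_of_le {E : Type} [LinearOrder E] {X : Set E} {a b y : E}
    (ha : a ∈ X) (hb : b ∈ X) (hay : a ≤ y) (hyb : y ≤ b) : y ∈ conv X :=
  ⟨a, ha, b, hb, hay, hyb⟩

theorem exists_le_of_mem_conv {E : Type} [LinearOrder E] {X : Set E} {y : E}
    (hy : y ∈ conv X) : ∃ a ∈ X, a ≤ y :=
  let ⟨a, ha, _, _, hay, _⟩ := hy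
  ⟨a, ha, hay⟩

theorem exists_ge_of_mem_conv {E : Type} [LinearOrder E] {X : Set E} {y : E}
    (hy : y ∈ conv X) : ∃ b ∈ X, y ≤ b :=
  let ⟨_, _, b, hb, _, hyb⟩ := hy
  ⟨b, hb, hyb⟩

open Digraph' in
theorem interval_split_at_processive_general {V E : Type} [LinearOrder E]
    (G : Digraph' V E) (hU2 : G.U2)
    (v : V)
    (e₁ e e₂ : E) (h₁ : e₁ < e) (h₂ : e < e₂)
    (ht : G.t e₁ = v) (hs : G.s e₂ = v) :
    (∃ i ∈ G.I v, e ≤ i) ∨ (∃ o ∈ G.O v, o ≤ e) := by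
  have hEv : e ∈ conv (G.Ev v) :=
    mem_conv_of_le_of_le (Or.inl ht) (Or.inr hs) h₁.le h₂.le
  rcases (hU2 v).2 ▸ hEv with hI | hO
  · exact Or.inl (exists_ge_of_mem_conv hI)
  · exact Or.inr (exists_le_of_mem_conv hO)

open Digraph' in
/-- For an upward planar order and a processive vertex `v`, if `e₁ ≺ e ≺ e₂` with
`t(e₁) = s(e₂) = v`, then either `e ⪯ I(v)⁺` or `O(v)⁻ ⪯ e`. -/
theorem interval_split_at_processive {V E : Type} [Fintype V] [Fintype E] [LinearOrder E]
    (G : Digraph' V E) (hG : G.Acyclic) (hU1 : G.U1) (hU2 : G.U2)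
    (v : V) (hI : (G.I v).Nonempty) (hO : (G.O v).Nonempty)
    (e₁ e e₂ : E) (h₁ : e₁ < e) (h₂ : e < e₂)
    (ht : G.t e₁ = v) (hs : G.s e₂ = v) :
    (∃ i ∈ G.I v, e ≤ i) ∨ (∃ o ∈ G.O v, o ≤ e) :=
  interval_split_at_processive_general G hU2 v e₁ e e₂ h₁ h₂ ht hs
end
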